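/- Any two Z^n-quivers are isomorphic (as quivers with arrow-type structure): there is a bijection of vertices and a bijection of arrows, compatible with sources, targets, and preserving arrow types. -/

import Mathlib

open CategoryTheory CategoryTheory.Limits

universe u v

/-- A quiver with arrows partitioned into `n+1` arrow types. -/
structure TypedQuiver (n : ℕ) where
  V : Type
  E : Type
  src : E → V
  tgt : E → V
  typ : E → Fin (n + 1)

namespace TypedQuiver

variable {n : ℕ}

/-- Paths in a typed quiver. -/
inductive Path (Q : TypedQuiver n) : Q.V → Q.V → Type where
  | nil (v : Q.V) : Path Q v v
  | cons {u : Q.V} (e : Q.E) (γ : Path Q u (Q.src e)) : Path Q u (Q.tgt e)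

namespace Path

variable {Q : TypedQuiver n}

/-- Length of a path. -/
def length : ∀ {u w : Q.V}, Q.Path u w → ℕ
  | _, _, nil _ => 0
  | _, _, cons _ γ => length γ + 1

/-- The number of arrows of a given type in a path. -/
def count : ∀ {u w : Q.V}, Q.Path u w → Fin (n + 1) → ℕ
  | _, _, nil _, _ => 0
  | _, _, cons e γ, t => count γ t + (if Q.typ e = t then 1 else 0)

/-- Concatenation of paths. -/
def comp : ∀ {u w x : Q.V}, Q.Path u w → Q.Path w x → Q.Path u x
  | _, _, _, γ, nil _ => γ
  | _, _, _, γ, cons e δ => cons e (comp γ δ)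

/-- A path is admissible if some arrow type does not occur in it. -/
def Admissible {u w : Q.V} (γ : Q.Path u w) : Prop := ∃ t, γ.count t = 0

/-- A path is simple if each arrow type occurs at most once. -/
def Simple {u w : Q.V} (γ : Q.Path u w) : Prop := ∀ t, γ.count t ≤ 1

/-- A maximal simple path: each arrow type occurs exactly once. -/
def MaximalSimple {u w : Q.V} (γ : Q.Path u w) : Prop := ∀ t, γ.count t = 1

/-- The essential type of a path: the set of arrow types occurring in it. -/
def essType {u w : Q.V} (γ : Q.Path u w) : Set (Fin (n + 1)) := {t | 0 < γ.count t}

end Path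

/-- A `ℤⁿ`-structure on a typed quiver. -/
structure IsZn (Q : TypedQuiver n) : Prop where
  npos : 0 < n
  nonempty : Nonempty Q.V
  unique_out : ∀ (v : Q.V) (t : Fin (n + 1)), ∃! e : Q.E, Q.src e = v ∧ Q.typ e = t
  connected : ∀ u w : Q.V, ∃ γ : Q.Path u w, γ.Admissible
  circuit : ∀ (u w : Q.V) (γ : Q.Path u w), γ.MaximalSimple → u = w
  same_type : ∀ (u w x : Q.V) (γ : Q.Path u w) (μ : Q.Path u x),
      γ.Admissible → μ.Admissible → (w = x ↔ γ.count = μ.count)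

/-- Two distinct vertices are neighbors if an admissible simple path connects them. -/
def Neighbors (Q : TypedQuiver n) (u w : Q.V) : Prop :=
  u ≠ w ∧ ∃ γ : Q.Path u w, γ.Admissible ∧ γ.Simple

/-- The hull of a set of vertices. -/
def hull (Q : TypedQuiver n) (H : Set Q.V) : Set Q.V :=
  {v | ∀ t : Fin (n + 1), ∃ z ∈ H, ∃ γ : Q.Path z v, γ.count t = 0}

/-- A representation of a typed quiver in a category. -/
structure Rep (Q : TypedQuiver n) (C : Type u) [Category.{v} C] where
  obj : Q.V → C
  map : ∀ e : Q.E, obj (Q.src e) ⟶ obj (Q.tgt e)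

namespace Rep

variable {Q : TypedQuiver n} {C : Type u} [Category.{v} C]

/-- The composition of the maps of a representation along a path. -/
def mapPath (𝔙 : Q.Rep C) : ∀ {u w : Q.V}, Q.Path u w → (𝔙.obj u ⟶ 𝔙.obj w)
  | _, _, .nil _ => 𝟙 _
  | _, _, .cons e γ => mapPath 𝔙 γ ≫ 𝔙.map e

end Rep

/-- A weakly linked net over a `ℤⁿ`-quiver. -/
structure IsWeaklyLinked (k : Type) [Field k] {Q : TypedQuiver n} {C : Type u}
    [Category.{v} C] [Preadditive C] [CategoryTheory.Linear k C] (𝔙 : Q.Rep C) : Prop where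
  scalar : ∀ (u w : Q.V) (γ₁ γ₂ : Q.Path u w), γ₂.Admissible →
      ∃ c : k, c ≠ 0 ∧ 𝔙.mapPath γ₁ = c • 𝔙.mapPath γ₂
  circuit : ∀ (u w : Q.V) (γ : Q.Path u w), γ.MaximalSimple → 𝔙.mapPath γ = 0

section Abelian

variable {Q : TypedQuiver n} {C : Type u} [Category.{v} C] [Abelian C]

/-- A linked net: kernels along admissible paths with disjoint essential types meet trivially. -/
def IsLinked (𝔙 : Q.Rep C) : Prop :=
  ∀ (u w x : Q.V) (γ₁ : Q.Path u w) (γ₂ : Q.Path u x), γ₁.Admissible → γ₂.Admissible →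
    γ₁.essType ∩ γ₂.essType = ∅ →
    kernelSubobject (𝔙.mapPath γ₁) ⊓ kernelSubobject (𝔙.mapPath γ₂) = ⊥

/-- Exactness: `Ker φ^u_w = Im φ^w_u` for neighboring vertices. -/
def IsExact (𝔙 : Q.Rep C) : Prop :=
  ∀ (u w : Q.V), Q.Neighbors u w → ∀ (γ : Q.Path u w) (μ : Q.Path w u),
    γ.Admissible → μ.Admissible →
    kernelSubobject (𝔙.mapPath γ) = imageSubobject (𝔙.mapPath μ)

/-- Binary: each associated map is zero or a monomorphism. -/
def IsBinary (𝔙 : Q.Rep C) : Prop :=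
  ∀ (u w : Q.V) (γ : Q.Path u w), 𝔙.mapPath γ = 0 ∨ Mono (𝔙.mapPath γ)

/-- Pure: each epimorphism among the associated maps is an isomorphism. -/
def IsPure (𝔙 : Q.Rep C) : Prop :=
  ∀ (u w : Q.V) (γ : Q.Path u w), Epi (𝔙.mapPath γ) → IsIso (𝔙.mapPath γ)

/-- Locally finite: compositions along long enough arriving paths vanish. -/
def LocallyFinite (𝔙 : Q.Rep C) : Prop :=
  ∀ v : Q.V, ∃ ℓ : ℕ, ∀ (u : Q.V) (γ : Q.Path u v), ℓ < γ.length → 𝔙.mapPath γ = 0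

/-- Faithfully generated by a vertex `w`: `φ^w_v` is an isomorphism for every `v`. -/
def FaithfullyGeneratedBy (𝔙 : Q.Rep C) (w : Q.V) : Prop :=
  ∀ (v : Q.V) (γ : Q.Path w v), γ.Admissible → IsIso (𝔙.mapPath γ)

/-- Generated by a set `H`: the images of compositions along paths from `H` to `v` sum
to the whole object at `v` (stated via upper bounds of subobjects). -/
def GeneratedBy (𝔙 : Q.Rep C) (H : Set Q.V) : Prop :=
  ∀ v : Q.V, ∀ W : Subobject (𝔙.obj v),
    (∀ z ∈ H, ∀ γ : Q.Path z v, imageSubobject (𝔙.mapPath γ) ≤ W) → W = ⊤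

/-- 1-generated by a set `H`. -/
def OneGeneratedBy (𝔙 : Q.Rep C) (H : Set Q.V) : Prop :=
  ∀ v : Q.V, ∃ w ∈ H, ∃ γ : Q.Path w v, γ.Admissible ∧ Epi (𝔙.mapPath γ)

/-- A subobject-valued sum being everything, stated via upper bounds. -/
def SumTop {X : C} (S : Set (Subobject X)) : Prop :=
  ∀ W : Subobject X, (∀ s ∈ S, s ≤ W) → W = ⊤

/-- A primitive vertex for a net: the images of the maps of arrows arriving at `w` do
not sum to the whole object. -/
def Primitive (𝔙 : Q.Rep C) (w : Q.V) : Prop :=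
  ¬ SumTop {s : Subobject (𝔙.obj w) | ∃ (e : Q.E) (h : Q.tgt e = w),
      s = imageSubobject (𝔙.map e ≫ eqToHom (congrArg 𝔙.obj h))}

/-- The intersection property at a vertex `v`, where `K v I` denotes `Ker φ^v_I`. -/
def IntersectionProp (𝔙 : Q.Rep C)
    (K : ∀ v : Q.V, Set (Fin (n + 1)) → Subobject (𝔙.obj v)) (v : Q.V) : Prop :=
  ∀ (m : ℕ) (I : Fin (m + 1) → Set (Fin (n + 1))),
    (Finset.univ.sup fun ℓ : Fin m => K v (I ℓ.succ)) ⊓ K v (I 0)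
      = Finset.univ.sup fun ℓ : Fin m => K v (I ℓ.succ ∩ I 0)

end Abelian

end TypedQuiver

namespace TypedQuiver

variable {n : ℕ} {Q : TypedQuiver n}

/-- Cast a path along an equality of its endpoint. -/
def Path.cast' {u w w' : Q.V} (h : w = w') (γ : Q.Path u w) : Q.Path u w' := h ▸ γ

lemma Path.count_cast' {u w w' : Q.V} (h : w = w') (γ : Q.Path u w) :
    (γ.cast' h).count = γ.count := by subst h; rfl

/-- The unique edge leaving `v` with type `t`. -/
noncomputable def step (hQ : Q.IsZn) (v : Q.V) (t : Fin (n + 1)) : Q.E :=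
  (hQ.unique_out v t).choose

lemma step_src (hQ : Q.IsZn) (v : Q.V) (t : Fin (n + 1)) : Q.src (step hQ v t) = v :=
  (hQ.unique_out v t).choose_spec.1.1

lemma step_typ (hQ : Q.IsZn) (v : Q.V) (t : Fin (n + 1)) : Q.typ (step hQ v t) = t :=
  (hQ.unique_out v t).choose_spec.1.2

lemma step_unique (hQ : Q.IsZn) {v : Q.V} {t : Fin (n + 1)} {e : Q.E}
    (h1 : Q.src e = v) (h2 : Q.typ e = t) : e = step hQ v t :=
  (hQ.unique_out v t).choose_spec.2 e ⟨h1, h2⟩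

/-- Follow a list of types (head is the last edge traversed). -/
noncomputable def follow (hQ : Q.IsZn) (v : Q.V) : List (Fin (n + 1)) → Σ w, Q.Path v w
  | [] => ⟨v, .nil v⟩
  | t :: l =>
    let p := follow hQ v l
    ⟨Q.tgt (step hQ p.1 t), .cons (step hQ p.1 t) (p.2.cast' (step_src hQ p.1 t).symm)⟩

lemma follow_count (hQ : Q.IsZn) (v : Q.V) (l : List (Fin (n + 1))) (t : Fin (n + 1)) :
    ((follow hQ v l).2).count t = l.count t := by
  induction l with
  | nil => simp [follow, Path.count]
  | cons a l ih =>
    simp only [follow, Path.count, Path.count_cast', ih, step_typ, List.count_cons]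
    by_cases h : a = t <;> simp [h]

lemma Path.count_comp {u w x : Q.V} (γ : Q.Path u w) (δ : Q.Path w x) (t : Fin (n + 1)) :
    (γ.comp δ).count t = γ.count t + δ.count t := by
  induction δ with
  | nil => simp [Path.comp, Path.count]
  | cons e δ ih => simp only [Path.comp, Path.count, ih]; omega

/-- The count vector from `u` to `w`. -/
noncomputable def cnt (hQ : Q.IsZn) (u w : Q.V) : Fin (n + 1) → ℕ :=
  (hQ.connected u w).choose.count

lemma cnt_adm (hQ : Q.IsZn) (u w : Q.V) : ∃ t, cnt hQ u w t = 0 :=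
  (hQ.connected u w).choose_spec

lemma count_eq_cnt (hQ : Q.IsZn) {u w : Q.V} (γ : Q.Path u w) (hγ : γ.Admissible) :
    γ.count = cnt hQ u w :=
  (hQ.same_type u w w γ _ hγ (hQ.connected u w).choose_spec).mp rfl

lemma endpoint_eq (hQ : Q.IsZn) {u w x : Q.V} (γ : Q.Path u w) (μ : Q.Path u x)
    (hγ : γ.Admissible) (hμ : μ.Admissible) (h : γ.count = μ.count) : w = x :=
  (hQ.same_type u w x γ μ hγ hμ).mpr h

/-- A list realizing a given count vector. -/
def listOf (c : Fin (n + 1) → ℕ) : List (Fin (n + 1)) :=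
  (List.finRange (n + 1)).flatMap fun t => List.replicate (c t) t

lemma count_flatMap_replicate (c : Fin (n + 1) → ℕ) (t : Fin (n + 1)) :
    ∀ l : List (Fin (n + 1)), t ∉ l →
      (l.flatMap fun u => List.replicate (c u) u).count t = 0 := by
  intro l
  induction l with
  | nil => simp
  | cons a l ih =>
    intro ht
    simp only [List.flatMap_cons, List.count_append, List.count_replicate]
    rw [ih (fun h => ht (List.mem_cons_of_mem a h))]
    simp only [List.mem_cons, not_or] at ht
    simp [Ne.symm ht.1]

lemma count_flatMap_replicate' (c : Fin (n + 1) → ℕ) (t : Fin (n + 1)) :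
    ∀ l : List (Fin (n + 1)), l.Nodup → t ∈ l →
      (l.flatMap fun u => List.replicate (c u) u).count t = c t := by
  intro l
  induction l with
  | nil => simp
  | cons a l ih =>
    intro hnd ht
    simp only [List.flatMap_cons, List.count_append, List.count_replicate]
    rcases List.mem_cons.mp ht with rfl | ht'
    · rw [count_flatMap_replicate c t l (List.Nodup.notMem hnd)]
      simp
    · have hne : a ≠ t := fun h => (List.Nodup.notMem hnd) (h ▸ ht')
      rw [ih (List.Nodup.of_cons hnd) ht']
      simp [hne]

lemma listOf_count (c : Fin (n + 1) → ℕ) (t : Fin (n + 1)) : (listOf c).count t = c t := by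
  rw [listOf]
  exact count_flatMap_replicate' c t _ (List.nodup_finRange _) (List.mem_finRange t)

noncomputable def reach (hQ : Q.IsZn) (v : Q.V) (c : Fin (n + 1) → ℕ) : Q.V :=
  (follow hQ v (listOf c)).1

noncomputable def reachPath (hQ : Q.IsZn) (v : Q.V) (c : Fin (n + 1) → ℕ) :
    Q.Path v (reach hQ v c) := (follow hQ v (listOf c)).2

lemma reachPath_count (hQ : Q.IsZn) (v : Q.V) (c : Fin (n + 1) → ℕ) :
    (reachPath hQ v c).count = c := by
  funext t; exact (follow_count hQ v (listOf c) t).trans (listOf_count c t)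

lemma reachPath_adm (hQ : Q.IsZn) (v : Q.V) {c : Fin (n + 1) → ℕ} (hc : ∃ t, c t = 0) :
    (reachPath hQ v c).Admissible := by
  obtain ⟨t, ht⟩ := hc; exact ⟨t, by rw [reachPath_count]; exact ht⟩

lemma cnt_reach (hQ : Q.IsZn) (v : Q.V) {c : Fin (n + 1) → ℕ} (hc : ∃ t, c t = 0) :
    cnt hQ v (reach hQ v c) = c := by
  rw [← count_eq_cnt hQ (reachPath hQ v c) (reachPath_adm hQ v hc), reachPath_count]

lemma reach_cnt (hQ : Q.IsZn) (v w : Q.V) : reach hQ v (cnt hQ v w) = w :=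
  endpoint_eq hQ (reachPath hQ v _) (hQ.connected v w).choose
    (reachPath_adm hQ v (cnt_adm hQ v w)) (hQ.connected v w).choose_spec
    (by rw [reachPath_count]; rfl)

/-- The count vector of the target of an edge of type `s` leaving a vertex of count `c`. -/
noncomputable def nextCnt (c : Fin (n + 1) → ℕ) (s : Fin (n + 1)) : Fin (n + 1) → ℕ :=
  if ∃ t, t ≠ s ∧ c t = 0 then (fun t => c t + if s = t then 1 else 0)
  else fun t => if t = s then 0 else c t - 1

lemma cnt_tgt (hQ : Q.IsZn) (v : Q.V) (e : Q.E) :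
    cnt hQ v (Q.tgt e) = nextCnt (cnt hQ v (Q.src e)) (Q.typ e) := by
  classical
  set c := cnt hQ v (Q.src e) with hcdef
  set s := Q.typ e with hsdef
  let γ₀ : Q.Path v (Q.src e) := (reachPath hQ v c).cast' (by rw [hcdef, reach_cnt])
  have hγc : γ₀.count = c := by
    show ((reachPath hQ v c).cast' _).count = c
    rw [Path.count_cast', reachPath_count]
  by_cases h : ∃ t, t ≠ s ∧ c t = 0
  · -- easy case: extending stays admissible
    rw [nextCnt, if_pos h]
    obtain ⟨t0, ht0, hct0⟩ := h
    have hst0 : ¬ s = t0 := fun hh => ht0 hh.symm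
    have := count_eq_cnt hQ (Path.cons e γ₀)
      ⟨t0, by simp only [Path.count, hγc]
              simp [hct0, ← hsdef, hst0]⟩
    rw [← this]
    funext t
    simp only [Path.count, hγc, ← hsdef]
  · rw [nextCnt, if_neg h]
    push_neg at h
    have hcs : c s = 0 := by
      obtain ⟨t0, ht0⟩ := cnt_adm hQ v (Q.src e)
      rcases eq_or_ne t0 s with rfl | hne
      · exact ht0
      · exact absurd ht0 (h t0 hne)
    have hcpos : ∀ t, t ≠ s → 0 < c t := fun t ht => Nat.pos_of_ne_zero (h t ht)
    set c' : Fin (n + 1) → ℕ := fun t => if t = s then 0 else c t - 1 with hc'def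
    set x := reach hQ v c' with hxdef
    set rest : List (Fin (n + 1)) := (List.finRange (n + 1)).filter (· ≠ s) with hrest
    have hrestcount : ∀ t, rest.count t = if t = s then 0 else 1 := by
      intro t
      by_cases ht : t = s
      · rw [if_pos ht, List.count_eq_zero_of_not_mem]
        simp [hrest, ht]
      · rw [if_neg ht, List.count_eq_one_of_mem ((List.nodup_finRange _).filter _)]
        simp [hrest, ht, List.mem_finRange]
    set p := follow hQ x rest with hpdef
    -- the full circuit
    have hcirc : x = Q.tgt (step hQ p.1 s) := by
      refine hQ.circuit x _ ((follow hQ x (s :: rest)).2) ?_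
      intro t
      refine (follow_count hQ x (s :: rest) t).trans ?_
      rw [List.count_cons, hrestcount]
      by_cases ht : t = s <;> simp [ht, Ne.symm]
    -- the composite path from v to p.1 has count c
    have hcomp : ((reachPath hQ v c').comp p.2).count = c := by
      funext t
      rw [Path.count_comp, reachPath_count, follow_count, hrestcount]
      by_cases ht : t = s
      · simp [hc'def, ht, hcs]
      · simp only [hc'def, if_neg ht]
        have := hcpos t ht; omega
    have hmid : p.1 = Q.src e := by
      refine endpoint_eq hQ ((reachPath hQ v c').comp p.2) γ₀ ?_ ?_ ?_
      · exact ⟨s, by rw [hcomp]; exact hcs⟩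
      · exact ⟨s, by rw [hγc]; exact hcs⟩
      · rw [hcomp, hγc]
    have hestep : e = step hQ p.1 s := step_unique hQ hmid.symm hsdef.symm
    have hx : Q.tgt e = x := by rw [hestep]; exact hcirc.symm
    rw [hx, hxdef, cnt_reach hQ v ⟨s, by simp [hc'def]⟩]

end TypedQuiver

open TypedQuiver in
/-- Any two `ℤⁿ`-quivers are isomorphic: there are bijections of vertices
and of arrows, compatible with sources and targets, and preserving arrow types. -/
theorem stmt2 {n : ℕ} (Q Q' : TypedQuiver n) (hQ : Q.IsZn) (hQ' : Q'.IsZn) :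
    ∃ (f₀ : Q.V ≃ Q'.V) (f₁ : Q.E ≃ Q'.E),
      (∀ e : Q.E, Q'.src (f₁ e) = f₀ (Q.src e)) ∧
      (∀ e : Q.E, Q'.tgt (f₁ e) = f₀ (Q.tgt e)) ∧
      (∀ e : Q.E, Q'.typ (f₁ e) = Q.typ e) := by
  classical
  obtain ⟨v⟩ := hQ.nonempty
  obtain ⟨v'⟩ := hQ'.nonempty
  let F : Q.V → Q'.V := fun w => reach hQ' v' (cnt hQ v w)
  let G : Q'.V → Q.V := fun w => reach hQ v (cnt hQ' v' w)
  have hcntF : ∀ w, cnt hQ' v' (F w) = cnt hQ v w := fun w => cnt_reach hQ' v' (cnt_adm hQ v w)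
  have hcntG : ∀ w, cnt hQ v (G w) = cnt hQ' v' w := fun w => cnt_reach hQ v (cnt_adm hQ' v' w)
  have hGF : ∀ w, G (F w) = w := by
    intro w; show reach hQ v (cnt hQ' v' (F w)) = w; rw [hcntF]; exact reach_cnt hQ v w
  have hFG : ∀ w, F (G w) = w := by
    intro w; show reach hQ' v' (cnt hQ v (G w)) = w; rw [hcntG]; exact reach_cnt hQ' v' w
  let F₁ : Q.E → Q'.E := fun e => step hQ' (F (Q.src e)) (Q.typ e)
  let G₁ : Q'.E → Q.E := fun e => step hQ (G (Q'.src e)) (Q'.typ e)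
  have hsrc : ∀ e, Q'.src (F₁ e) = F (Q.src e) := fun e => step_src _ _ _
  have htyp : ∀ e, Q'.typ (F₁ e) = Q.typ e := fun e => step_typ _ _ _
  have hG₁F₁ : ∀ e, G₁ (F₁ e) = e := by
    intro e
    show step hQ (G (Q'.src (F₁ e))) (Q'.typ (F₁ e)) = e
    rw [hsrc, htyp, hGF]
    exact (step_unique hQ rfl rfl).symm
  have hF₁G₁ : ∀ e, F₁ (G₁ e) = e := by
    intro e
    have h1 : Q.src (G₁ e) = G (Q'.src e) := step_src _ _ _
    have h2 : Q.typ (G₁ e) = Q'.typ e := step_typ _ _ _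
    show step hQ' (F (Q.src (G₁ e))) (Q.typ (G₁ e)) = e
    rw [h1, h2, hFG]
    exact (step_unique hQ' rfl rfl).symm
  refine ⟨⟨F, G, hGF, hFG⟩, ⟨F₁, G₁, hG₁F₁, hF₁G₁⟩, hsrc, ?_, htyp⟩
  intro e
  have hA : cnt hQ' v' (Q'.tgt (F₁ e)) = cnt hQ v (Q.tgt e) := by
    rw [cnt_tgt hQ' v' (F₁ e), cnt_tgt hQ v e, hsrc, htyp, hcntF]
  show Q'.tgt (F₁ e) = F (Q.tgt e)
  calc Q'.tgt (F₁ e) = reach hQ' v' (cnt hQ' v' (Q'.tgt (F₁ e))) := (reach_cnt hQ' v' _).symm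
    _ = reach hQ' v' (cnt hQ v (Q.tgt e)) := by rw [hA]
    _ = F (Q.tgt e) := rfl
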